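/- Let p be prime, r coprime to p with 0 < r < p, and d_k as above. For each i ∈ [1, p-2], there is no index j ∈ [0, p-1] such that both the j-th coordinate of ω_{i-1} = d_0 + ... + d_{i-1} and the j-th coordinate of d_i equal 1, nor any j such that both equal -1. -/

import Mathlib

/-!
Since `r` is invertible mod `p`, the residues of `j + k r` for `k < p` are pairwise distinct.
So if `d_i` has a `1` (resp. `-1`) at `j`, no earlier `d_k` does, and the coordinate of
`ω_{i-1}` at `j` is a sum of terms `≤ 0` (resp. `≥ 0`).
-/

/-- The entry `d_{k,j}` is `markerMod p (j + k * r)`. -/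
def markerMod (p n : ℕ) : ℤ :=
  if n % p = 0 then 1 else if n % p = 1 then -1 else 0

section markerMod

variable {p n : ℕ}

lemma markerMod_eq_one_iff : markerMod p n = 1 ↔ n % p = 0 := by
  unfold markerMod; split_ifs <;> simp_all

lemma markerMod_eq_neg_one_iff : markerMod p n = -1 ↔ n % p = 1 := by
  unfold markerMod; split_ifs <;> simp_all

lemma markerMod_nonpos (h : n % p ≠ 0) : markerMod p n ≤ 0 := by
  unfold markerMod; split_ifs <;> simp_all

lemma markerMod_nonneg (h : n % p ≠ 1) : 0 ≤ markerMod p n := by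
  unfold markerMod; split_ifs <;> simp_all

end markerMod

lemma injOn_add_mul_mod {p r : ℕ} (hcop : r.Coprime p) (j : ℕ) :
    Set.InjOn (fun k => (j + k * r) % p) (Set.Iio p) := by
  intro k hk i hi h
  have hmul : k * r ≡ i * r [MOD p] := Nat.ModEq.add_left_cancel' j h
  exact Nat.ModEq.eq_of_lt_of_lt (hmul.cancel_right_of_coprime hcop.symm) hk hi

theorem no_common_nonzero_coordinate_general (p r : ℕ)
    (hcop : Nat.Coprime r p)
    (d : ℕ → Fin p → ℤ)
    (hd : ∀ k : ℕ, ∀ j : Fin p,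
      d k j = if ((j : ℕ) + k * r) % p = 0 then 1
              else if ((j : ℕ) + k * r) % p = 1 then -1 else 0) :
    ∀ i : ℕ, 1 ≤ i → i ≤ p - 2 →
      ∀ j : Fin p,
        ¬((∑ k ∈ Finset.range i, d k j) = 1 ∧ d i j = 1) ∧
        ¬((∑ k ∈ Finset.range i, d k j) = -1 ∧ d i j = -1) := by
  intro i _ hip j
  have hd' : ∀ k, d k j = markerMod p (j + k * r) := fun k => hd k j
  have hfresh : ∀ k ∈ Finset.range i, ((j : ℕ) + k * r) % p ≠ (j + i * r) % p :=
    fun k hk heq => (Finset.mem_range.1 hk).ne <|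
      injOn_add_mul_mod hcop j (show k < p by simp at hk; omega) (show i < p by omega) heq
  simp only [hd', markerMod_eq_one_iff, markerMod_eq_neg_one_iff]
  refine ⟨fun ⟨hsum, hi⟩ => ?_, fun ⟨hsum, hi⟩ => ?_⟩
  · have := Finset.sum_nonpos fun k hk => markerMod_nonpos (hi ▸ hfresh k hk)
    omega
  · have := Finset.sum_nonneg fun k hk => markerMod_nonneg (hi ▸ hfresh k hk)
    omega

theorem no_common_nonzero_coordinate (p r : ℕ) (hp : p.Prime) (hr : 0 < r) (hrp : r < p)
    (hcop : Nat.Coprime r p)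
    (d : ℕ → Fin p → ℤ)
    (hd : ∀ k : ℕ, ∀ j : Fin p,
      d k j = if ((j : ℕ) + k * r) % p = 0 then 1
              else if ((j : ℕ) + k * r) % p = 1 then -1 else 0) :
    ∀ i : ℕ, 1 ≤ i → i ≤ p - 2 →
      ∀ j : Fin p,
        ¬((∑ k ∈ Finset.range i, d k j) = 1 ∧ d i j = 1) ∧
        ¬((∑ k ∈ Finset.range i, d k j) = -1 ∧ d i j = -1) :=
  no_common_nonzero_coordinate_general p r hcop d hd
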